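/- Let ℓ ∈ F_q[X0,X1,X2] be a nonzero linear form dividing C, and let Q ∈ F_q[X0,X1,X2] be an irreducible factor of C with deg Q ≥ 2. Then there is no point (x0 : x1 : x2) ∈ ℙ²(F_q) with ℓ(x0, x1, x2) = 0 and Q(x0, x1, x2) = 0; that is, the union of the linear components of the curve C = 0 is F_q-disjoint from its remaining components. -/

import Mathlib

/-
Since `u ^ d = η(u)` in `F_q`, on the `F_q`-points of a linear factor `ℓ = 0` of `C` the equation
`C = 0` reads `η(x₀) + η(x₁) + η(x₂) + η(L) = 0`, where `L = e₀x₀ + e₁x₁ + e₂x₂`. Testing this at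
three points of the line forces `ℓ` to be a multiple of `X i - c X j` with `η(c) = -1`,
`e j = -c e i` and `η(e k) = -1`, `k` being the third index.

If `e i = 0`, then `C = X i ^ d + X j ^ d` splits into linear factors over `F_q`, so it has no
irreducible factor of degree `≥ 2`. Otherwise a common point `v` of `ℓ` and `Q` is a singular
point of `C`, and `∂C/∂X i (v) = 0` gives `(e i v i)² = L(v)²`. Either sign yields a second linear
component through `v`, so `v` lies on three distinct components and all second derivatives of
`C` vanish at `v`; but `∂²C/∂X i ∂X j = d (d - 1) e i e j L ^ (d - 2)` does not.
-/

open MvPolynomial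

/-- The polynomial `C = X0^d + X1^d + X2^d + (e0·X0 + e1·X1 + e2·X2)^d` over `F_q`. -/
noncomputable def fermatSlice (F : Type) [Field F] (d : ℕ) (e0 e1 e2 : F) :
    MvPolynomial (Fin 3) F :=
  X 0 ^ d + X 1 ^ d + X 2 ^ d +
    (MvPolynomial.C e0 * X 0 + MvPolynomial.C e1 * X 1 + MvPolynomial.C e2 * X 2) ^ d

namespace MvPolynomial

variable {σ K : Type*} [Field K]

theorem eq_sum_C_mul_X_of_isHomogeneous_one [Fintype σ] [DecidableEq σ] {ℓ : MvPolynomial σ K}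
    (hℓ : ℓ.IsHomogeneous 1) : ℓ = ∑ i, C (coeff (Finsupp.single i 1) ℓ) * X i := by
  ext m
  simp only [coeff_sum, coeff_C_mul, coeff_X]
  by_cases hm : m.degree = 1
  · obtain ⟨i, rfl⟩ := (Finsupp.range_single_one (σ := σ)).symm.subset hm
    simp [Finsupp.single_eq_single_iff]
  · rw [hℓ.coeff_eq_zero hm, eq_comm]
    refine Finset.sum_eq_zero fun i _ => ?_
    rw [if_neg (by rintro rfl; simp at hm), mul_zero]

theorem totalDegree_X_sub_C_mul_X {i j : σ} (hij : i ≠ j) (a : K) :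
    (X i - C a * X j : MvPolynomial σ K).totalDegree = 1 := by
  classical
  refine ((isHomogeneous_X K i).sub ((isHomogeneous_X K j).C_mul a)).totalDegree fun h => ?_
  simpa [Pi.single_apply, hij.symm] using congrArg (eval (Pi.single i 1)) h

theorem prime_X_sub_C_mul_X {i j : σ} (hij : i ≠ j) (a : K) :
    Prime (X i - C a * X j : MvPolynomial σ K) := by
  refine (irreducible_of_totalDegree_eq_one (totalDegree_X_sub_C_mul_X hij a) fun x hx => ?_).prime
  classical
  refine isUnit_iff_ne_zero.mpr fun hx0 => ?_
  simpa [hx0, hij.symm] using hx (Finsupp.single i 1)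

theorem not_dvd_X_sub_C_mul_X {Q : MvPolynomial σ K} (hQ : 2 ≤ Q.totalDegree) {i j : σ}
    (hij : i ≠ j) (a : K) : ¬ Q ∣ X i - C a * X j := by
  intro h
  have := totalDegree_le_of_dvd_of_isDomain h fun h0 => by
    simpa [h0] using totalDegree_X_sub_C_mul_X hij a
  rw [totalDegree_X_sub_C_mul_X hij a] at this
  omega

section Multiplicity

variable {R : Type*} [CommRing R] {v : σ → R} {P A B D : MvPolynomial σ R}

theorem eval_pderiv_eq_zero_of_dvd (hA : A ∣ P) (hB : Prime B) (hBP : B ∣ P) (hBA : ¬ B ∣ A)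
    (hAv : eval v A = 0) (hBv : eval v B = 0) (i : σ) : eval v (pderiv i P) = 0 := by
  obtain ⟨M, rfl⟩ := hA
  obtain ⟨N, rfl⟩ := (hB.dvd_or_dvd hBP).resolve_left hBA
  simp [hAv, hBv]

theorem eval_pderiv_pderiv_eq_zero_of_dvd (hA : A ∣ P) (hB : Prime B) (hBP : B ∣ P)
    (hBA : ¬ B ∣ A) (hD : Prime D) (hDP : D ∣ P) (hDA : ¬ D ∣ A) (hDB : ¬ D ∣ B)
    (hAv : eval v A = 0) (hBv : eval v B = 0) (hDv : eval v D = 0) (i j : σ) :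
    eval v (pderiv i (pderiv j P)) = 0 := by
  obtain ⟨M, rfl⟩ := hA
  obtain ⟨N, rfl⟩ := (hB.dvd_or_dvd hBP).resolve_left hBA
  obtain ⟨S, rfl⟩ := (hD.dvd_or_dvd ((hD.dvd_or_dvd hDP).resolve_left hDA)).resolve_left hDB
  simp [hAv, hBv, hDv]

end Multiplicity

end MvPolynomial

theorem Polynomial.homogenize_multiset_prod_X_sub_C {R : Type*} [CommRing R] [Nontrivial R]
    (m : Multiset R) :
    ((m.map fun x => X - C x).prod).homogenize (Multiset.card m) =
      (m.map fun x => MvPolynomial.X 0 - MvPolynomial.C x * MvPolynomial.X 1).prod := by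
  induction m using Multiset.induction_on with
  | empty => simp
  | cons x m ih =>
    rw [Multiset.map_cons, Multiset.prod_cons, Multiset.card_cons, add_comm,
      homogenize_mul _ _ (natDegree_X_sub_C_le x) (natDegree_multiset_prod_X_sub_C_eq_card m).le,
      ih]
    simp [homogenize_X]

theorem intCast_eq_zero_iff_of_abs_lt_ringChar {R : Type*} [Ring R] {n : ℤ}
    (hn : |n| < ringChar R) : (n : R) = 0 ↔ n = 0 :=
  ⟨fun h => Int.eq_zero_of_abs_lt_dvd ((CharP.intCast_eq_zero_iff R _ n).mp h) hn,
    fun h => by rw [h, Int.cast_zero]⟩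

namespace FiniteField

variable {F : Type} [Field F] [Fintype F] {d : ℕ}

theorem pow_two_mul_eq_one (hq : Fintype.card F = 2 * d + 1) {x : F} (hx : x ≠ 0) :
    x ^ (2 * d) = 1 := by
  simpa [hq] using pow_card_sub_one_eq_one x hx

theorem two_le_and_natCast_ne_zero (hq : Fintype.card F = 2 * d + 1) (hF : 5 ≤ ringChar F) :
    2 ≤ d ∧ (d : F) ≠ 0 ∧ ((d - 1 : ℕ) : F) ≠ 0 := by
  have hcard : (2 * d + 1 : F) = 0 := by exact_mod_cast hq ▸ cast_card_eq_zero F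
  have hd : (d : F) ≠ 0 := fun h => by simp [h] at hcard
  have hd0 : d ≠ 0 := by rintro rfl; simp at hd
  have hd1 : ((d - 1 : ℕ) : F) ≠ 0 := by
    rw [Nat.cast_sub (Nat.one_le_iff_ne_zero.mpr hd0), Nat.cast_one]
    intro h
    have h3 : ((3 : ℤ) : F) = 0 := by push_cast; linear_combination hcard - 2 * h
    have h5 : ((5 : ℕ) : ℤ) ≤ ringChar F := Int.ofNat_le.mpr hF
    have := (intCast_eq_zero_iff_of_abs_lt_ringChar (R := F) (by rw [abs_of_pos three_pos]; omega)).mp h3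
    omega
  refine ⟨?_, hd, hd1⟩
  by_contra! h
  interval_cases d <;> simp_all

theorem sq_eq_sq_of_pow_pred_eq (hq : Fintype.card F = 2 * d + 1) (hd : 2 ≤ d) {x y ε : F}
    (hε : ε ≠ 0) (h : y ^ (d - 1) = -(ε ^ d * x ^ (d - 1))) : y ^ 2 = x ^ 2 := by
  rcases eq_or_ne x 0 with rfl | hx
  · rw [zero_pow (by omega), mul_zero, neg_zero, pow_eq_zero_iff (by omega)] at h
    rw [h]
  have hy : y ≠ 0 := by
    rintro rfl
    rw [zero_pow (by omega), eq_comm, neg_eq_zero] at h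
    exact mul_ne_zero (pow_ne_zero _ hε) (pow_ne_zero _ hx) h
  have hsq : y ^ (2 * (d - 1)) = x ^ (2 * (d - 1)) := by
    rw [pow_mul', h, neg_sq, mul_pow, ← pow_mul', pow_two_mul_eq_one hq hε, one_mul, pow_mul']
  have hsplit (z : F) : z ^ (2 * d) = z ^ 2 * z ^ (2 * (d - 1)) := by
    rw [← pow_add]
    congr 1
    omega
  have := (pow_two_mul_eq_one hq hy).trans (pow_two_mul_eq_one hq hx).symm
  rw [hsplit, hsplit, hsq] at this
  exact mul_right_cancel₀ (pow_ne_zero _ hx) this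

theorem splits_X_pow_add_one (hq : Fintype.card F = 2 * d + 1) :
    (Polynomial.X ^ d + 1 : Polynomial F).Splits := by
  have hq1 : 1 < Fintype.card F := Fintype.one_lt_card
  have hsplit : (Polynomial.X ^ Fintype.card F - Polynomial.X : Polynomial F).Splits := by
    rw [Polynomial.splits_iff_card_roots, roots_X_pow_card_sub_X,
      X_pow_card_sub_X_natDegree_eq F hq1]
    rfl
  refine hsplit.of_dvd (X_pow_card_sub_X_ne_zero F hq1)
    ⟨Polynomial.X * (Polynomial.X ^ d - 1), ?_⟩
  rw [hq]
  ring

theorem X_pow_add_X_pow_eq_prod (hq : Fintype.card F = 2 * d + 1) {σ : Type*} (i j : σ) :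
    ∃ s : Multiset F, (X i ^ d + X j ^ d : MvPolynomial σ F) =
      (s.map fun x => X i - C x * X j).prod := by
  have hd : d ≠ 0 := by
    have := Fintype.one_lt_card (α := F)
    omega
  set p : Polynomial F := Polynomial.X ^ d + 1
  have hp : p.Splits := splits_X_pow_add_one hq
  have hpd : p.natDegree = d := Polynomial.natDegree_X_pow_add_C
  have key : (X 0 ^ d + X 1 ^ d : MvPolynomial (Fin 2) F) =
      (p.roots.map fun x => X 0 - C x * X 1).prod := by
    rw [← Polynomial.homogenize_multiset_prod_X_sub_C,
      ← hp.eq_prod_roots_of_monic (Polynomial.monic_X_pow_add_C 1 hd),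
      ← hp.natDegree_eq_card_roots, hpd]
    simp [p, Polynomial.homogenize_X_pow]
  refine ⟨p.roots, ?_⟩
  simpa [map_multiset_prod, Multiset.map_map, Function.comp_def] using congrArg (rename ![i, j]) key

section QuadraticChar

variable [DecidableEq F]

theorem quadraticChar_cast_eq_pow (hq : Fintype.card F = 2 * d + 1) (a : F) :
    (quadraticChar F a : F) = a ^ d := by
  have hF : ringChar F ≠ 2 := by
    rw [Ne, even_card_iff_char_two, hq]
    omega
  rw [quadraticChar_eq_pow_of_char_ne_two' hF, hq]
  congr 1
  omega

theorem pow_eq_neg_one_of_quadraticChar_eq_neg_one (hq : Fintype.card F = 2 * d + 1) {x : F}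
    (h : quadraticChar F x = -1) : x ^ d = -1 := by
  rw [← quadraticChar_cast_eq_pow hq, h, Int.cast_neg, Int.cast_one]

theorem quadraticChar_add_add_add_eq_zero (hq : Fintype.card F = 2 * d + 1)
    (hF : 5 ≤ ringChar F) {a b c w : F} (h : a ^ d + b ^ d + c ^ d + w ^ d = 0) :
    quadraticChar F a + quadraticChar F b + quadraticChar F c + quadraticChar F w = 0 := by
  have hbound (x : F) : |quadraticChar F x| ≤ 1 := by
    rcases quadraticChar_isQuadratic F x with hx | hx | hx <;> simp [hx]
  refine (intCast_eq_zero_iff_of_abs_lt_ringChar (R := F) ?_).mp ?_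
  · have : ((5 : ℕ) : ℤ) ≤ ringChar F := Int.ofNat_le.mpr hF
    grw [abs_add_le, abs_add_le, abs_add_le, hbound a, hbound b, hbound c, hbound w]
    omega
  · push_cast
    simpa only [quadraticChar_cast_eq_pow hq] using h

end QuadraticChar

end FiniteField

theorem quadraticChar_binary_forms {F : Type} [Field F] [Fintype F] [DecidableEq F]
    {α β γ δ : F}
    (H : ∀ s t : F, quadraticChar F s + quadraticChar F t + quadraticChar F (α * s + β * t) +
      quadraticChar F (γ * s + δ * t) = 0) :
    (β = 0 ∧ γ = 0 ∧ quadraticChar F α = -1 ∧ quadraticChar F δ = -1) ∨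
      (α = 0 ∧ δ = 0 ∧ quadraticChar F β = -1 ∧ quadraticChar F γ = -1) := by
  have h₁₀ := H 1 0
  have h₀₁ := H 0 1
  have h₁₁ := H 1 1
  simp only [mul_one, mul_zero, add_zero, zero_add, MulChar.map_one, MulChar.map_zero]
    at h₁₀ h₀₁ h₁₁
  have hq := quadraticChar_isQuadratic F
  have hzero {x : F} (h : quadraticChar F x = 0) : x = 0 := quadraticChar_eq_zero_iff.mp h
  have hsum : quadraticChar F (α + β) = -1 ∧ quadraticChar F (γ + δ) = -1 := by
    rcases hq (α + β) with h | h | h <;> rcases hq (γ + δ) with h' | h' | h' <;> omega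
  rcases hq α with hα | hα | hα <;> rcases hq γ with hγ | hγ | hγ <;> try omega
  · obtain rfl := hzero hα
    rw [zero_add] at hsum
    rcases hq δ with hδ | hδ | hδ <;> try omega
    exact .inr ⟨rfl, hzero hδ, hsum.1, hγ⟩
  · obtain rfl := hzero hγ
    rw [zero_add] at hsum
    rcases hq β with hβ | hβ | hβ <;> try omega
    exact .inl ⟨hzero hβ, rfl, hα, hsum.2⟩

theorem Fin.eq_or_eq_or_eq_of_ne {i j k : Fin 3} (hij : i ≠ j) (hik : i ≠ k) (hjk : j ≠ k)
    (m : Fin 3) : m = i ∨ m = j ∨ m = k := by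
  omega

theorem Fin.sum_univ_three_of_ne {M : Type*} [AddCommMonoid M] {i j k : Fin 3} (hij : i ≠ j)
    (hik : i ≠ k) (hjk : j ≠ k) (f : Fin 3 → M) : ∑ m, f m = f i + f j + f k := by
  have huniv : (Finset.univ : Finset (Fin 3)) = {i, j, k} :=
    (Finset.eq_univ_iff_forall.mpr fun m => by simpa using eq_or_eq_or_eq_of_ne hij hik hjk m).symm
  rw [huniv, Finset.sum_insert (by simp [hij, hik]), Finset.sum_pair hjk, add_assoc]

section FermatSlice

variable {F : Type} [Field F] {d : ℕ}

theorem fermatSlice_eq_sum (e : Fin 3 → F) :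
    fermatSlice F d (e 0) (e 1) (e 2) = ∑ m, X m ^ d + (∑ m, C (e m) * X m) ^ d := by
  simp [fermatSlice, Fin.sum_univ_three]

theorem eval_pderiv_fermatSlice (e v : Fin 3 → F) (m : Fin 3) :
    eval v (pderiv m (fermatSlice F d (e 0) (e 1) (e 2))) =
      d * (v m ^ (d - 1) + e m * (∑ n, e n * v n) ^ (d - 1)) := by
  simp only [fermatSlice_eq_sum, map_add, map_sum, Derivation.leibniz_pow, pderiv_X,
    Pi.single_apply, smul_eq_mul, mul_ite, mul_one, mul_zero, smul_ite, nsmul_eq_mul,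
    Finset.sum_ite_eq', Finset.mem_univ, ↓reduceIte, Derivation.leibniz, derivation_C, add_zero,
    map_mul, map_natCast, map_pow, eval_X, eval_C]
  ring

theorem eval_pderiv_pderiv_fermatSlice (e v : Fin 3 → F) {m n : Fin 3} (hmn : m ≠ n) :
    eval v (pderiv n (pderiv m (fermatSlice F d (e 0) (e 1) (e 2)))) =
      d * (d - 1 : ℕ) * e m * e n * (∑ l, e l * v l) ^ (d - 2) := by
  simp only [fermatSlice_eq_sum, map_add, map_sum, Derivation.leibniz_pow, pderiv_X,
    Pi.single_apply, smul_eq_mul, mul_ite, mul_one, mul_zero, smul_ite, nsmul_eq_mul,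
    Finset.sum_ite_eq', Finset.mem_univ, ↓reduceIte, Derivation.leibniz, derivation_C, add_zero,
    Nat.sub_sub, hmn, Derivation.map_natCast, zero_add,
    map_mul, map_natCast, eval_C, map_pow, eval_X]
  ring

end FermatSlice

/-- Conditions making the line `X i = c * X j` a component of `C`, `k` being the third index;
every linear factor of `C` is of this form. -/
structure IsLineComponent {F : Type} [Field F] (d : ℕ) (e : Fin 3 → F) (i j k : Fin 3) (c : F) :
    Prop where
  ne_ij : i ≠ j
  ne_ik : i ≠ k
  ne_jk : j ≠ k
  pow_eq : c ^ d = -1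
  coeff_eq : e j = -(c * e i)
  coeff_pow_eq : e k ^ d = -1

namespace IsLineComponent

variable {F : Type} [Field F] {d : ℕ} {e : Fin 3 → F} {i j k : Fin 3} {c : F} {v : Fin 3 → F}

theorem ne_zero (hL : IsLineComponent d e i j k c) (hd : d ≠ 0) : c ≠ 0 := by
  rintro rfl
  simpa [zero_pow hd] using hL.pow_eq

theorem coeff_ne_zero (hL : IsLineComponent d e i j k c) (hd : d ≠ 0) : e k ≠ 0 := by
  intro h
  simpa [h, zero_pow hd] using hL.coeff_pow_eq

theorem symm (hL : IsLineComponent d e i j k c) (hd : d ≠ 0) :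
    IsLineComponent d e j i k c⁻¹ where
  ne_ij := hL.ne_ij.symm
  ne_ik := hL.ne_jk
  ne_jk := hL.ne_ik
  pow_eq := by rw [inv_pow, hL.pow_eq, inv_neg, inv_one]
  coeff_eq := by rw [hL.coeff_eq, mul_neg, neg_neg, inv_mul_cancel_left₀ (hL.ne_zero hd)]
  coeff_pow_eq := hL.coeff_pow_eq

theorem dvd (hL : IsLineComponent d e i j k c) :
    X i - C c * X j ∣ fermatSlice F d (e 0) (e 1) (e 2) := by
  have hlin : ∑ m, C (e m) * X m - C (e k) * X k = C (e i) * (X i - C c * X j) := by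
    rw [Fin.sum_univ_three_of_ne hL.ne_ij hL.ne_ik hL.ne_jk, hL.coeff_eq, map_neg, map_mul]
    ring
  have h₁ := sub_dvd_pow_sub_pow (X i : MvPolynomial (Fin 3) F) (C c * X j) d
  have h₂ := (Dvd.intro_left _ hlin.symm).trans
    (sub_dvd_pow_sub_pow (∑ m, C (e m) * X m) (C (e k) * X k) d)
  convert dvd_add h₁ h₂ using 1
  rw [fermatSlice_eq_sum, Fin.sum_univ_three_of_ne hL.ne_ij hL.ne_ik hL.ne_jk, mul_pow, mul_pow,
    ← map_pow, ← map_pow, hL.pow_eq, hL.coeff_pow_eq, map_neg, map_one]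
  ring

theorem sum_coeff_mul_eq (hL : IsLineComponent d e i j k c) (hvi : v i = c * v j) :
    ∑ m, e m * v m = e k * v k := by
  rw [Fin.sum_univ_three_of_ne hL.ne_ij hL.ne_ik hL.ne_jk, hL.coeff_eq, hvi]
  ring

theorem fermatSlice_eq (hL : IsLineComponent d e i j k c) (hi : e i = 0) :
    fermatSlice F d (e 0) (e 1) (e 2) = X i ^ d + X j ^ d := by
  have hj : e j = 0 := by rw [hL.coeff_eq, hi, mul_zero, neg_zero]
  rw [fermatSlice_eq_sum, Fin.sum_univ_three_of_ne hL.ne_ij hL.ne_ik hL.ne_jk,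
    Fin.sum_univ_three_of_ne hL.ne_ij hL.ne_ik hL.ne_jk, hi, hj]
  simp [mul_pow, ← map_pow, hL.coeff_pow_eq]

theorem eval_pderiv_eq_zero (hL : IsLineComponent d e i j k c) {Q : MvPolynomial (Fin 3) F}
    (hQ : Irreducible Q) (hQdeg : 2 ≤ Q.totalDegree)
    (hQdvd : Q ∣ fermatSlice F d (e 0) (e 1) (e 2)) (hvi : v i = c * v j) (hQv : eval v Q = 0)
    (m : Fin 3) : eval v (pderiv m (fermatSlice F d (e 0) (e 1) (e 2))) = 0 :=
  eval_pderiv_eq_zero_of_dvd hL.dvd hQ.prime hQdvd (not_dvd_X_sub_C_mul_X hQdeg hL.ne_ij c)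
    (by simp [hvi]) hQv m

theorem pow_eq_of_eval_pderiv_eq_zero (hL : IsLineComponent d e i j k c) (hd : (d : F) ≠ 0)
    (hvi : v i = c * v j) {m : Fin 3}
    (h : eval v (pderiv m (fermatSlice F d (e 0) (e 1) (e 2))) = 0) :
    v m ^ (d - 1) = -(e m * (e k * v k) ^ (d - 1)) := by
  rw [eval_pderiv_fermatSlice, hL.sum_coeff_mul_eq hvi] at h
  linear_combination (mul_eq_zero.mp h).resolve_left hd

theorem coeff_pow_eq_of_mul_eq_neg (hd : 2 ≤ d) (hξ : e k * v k ≠ 0)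
    (hsing : v i ^ (d - 1) = -(e i * (e k * v k) ^ (d - 1))) (hy : e i * v i = -(e k * v k)) :
    e i ^ d = (-1) ^ d := by
  obtain ⟨n, rfl⟩ : ∃ n, d = n + 1 := ⟨d - 1, by omega⟩
  rw [Nat.add_sub_cancel] at hsing
  have key : (e i ^ (n + 1) + (-1) ^ n) * (e k * v k) ^ n = 0 := by
    have := congrArg (· ^ n) hy
    rw [mul_pow, neg_pow (e k * v k)] at this
    linear_combination e i ^ n * hsing - this
  rw [pow_succ]
  linear_combination (mul_eq_zero.mp key).resolve_right (pow_ne_zero _ hξ)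

theorem other_of_coeff_pow_eq (hL : IsLineComponent d e i j k c) (hei : e i ≠ 0)
    (he : e i ^ d = (-1) ^ d) :
    IsLineComponent d e i k j (-(e k / e i)) where
  ne_ij := hL.ne_ik
  ne_ik := hL.ne_ij
  ne_jk := hL.ne_jk.symm
  pow_eq := by
    rw [neg_pow, div_pow, he, hL.coeff_pow_eq]
    field_simp
  coeff_eq := by field_simp
  coeff_pow_eq := by
    rw [hL.coeff_eq, neg_pow, mul_pow, hL.pow_eq, he, ← mul_assoc, mul_neg_one, neg_mul,
      ← pow_add, ← two_mul, pow_mul, neg_one_sq, one_pow]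

end IsLineComponent

section Classification

variable {F : Type} [Field F] [Fintype F] [DecidableEq F] {d : ℕ} {e a : Fin 3 → F}
  {i j k : Fin 3}

theorem quadraticChar_sum_eq_zero_of_linear_dvd (hq : Fintype.card F = 2 * d + 1)
    (hF : 5 ≤ ringChar F) (hij : i ≠ j) (hik : i ≠ k) (hjk : j ≠ k) (hi : a i ≠ 0)
    (hdvd : ∑ m, C (a m) * X m ∣ fermatSlice F d (e 0) (e 1) (e 2)) (s t : F) :
    quadraticChar F s + quadraticChar F t +
      quadraticChar F (-(a j / a i) * s + -(a k / a i) * t) +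
      quadraticChar F ((e i * -(a j / a i) + e j) * s + (e i * -(a k / a i) + e k) * t) = 0 := by
  set v : Fin 3 → F := fun m => if m = i then -(a j / a i) * s + -(a k / a i) * t
    else if m = j then s else t
  have hvi : v i = -(a j / a i) * s + -(a k / a i) * t := by simp [v]
  have hvj : v j = s := by simp [v, hij.symm]
  have hvk : v k = t := by simp [v, hik.symm, hjk.symm]
  have hℓv : eval v (∑ m, C (a m) * X m) = 0 := by
    simp only [map_sum, map_mul, eval_C, eval_X]
    rw [Fin.sum_univ_three_of_ne hij hik hjk, hvi, hvj, hvk]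
    field_simp
    ring
  have hC : eval v (fermatSlice F d (e 0) (e 1) (e 2)) = 0 := by
    obtain ⟨M, hM⟩ := hdvd
    rw [hM, map_mul, hℓv, zero_mul]
  rw [fermatSlice_eq_sum] at hC
  simp only [map_add, map_pow, map_sum, map_mul, eval_C, eval_X] at hC
  rw [Fin.sum_univ_three_of_ne hij hik hjk, Fin.sum_univ_three_of_ne hij hik hjk,
    hvi, hvj, hvk] at hC
  refine FiniteField.quadraticChar_add_add_add_eq_zero hq hF ?_
  linear_combination hC

theorem exists_isLineComponent_of_coeff_eq_zero (hq : Fintype.card F = 2 * d + 1)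
    (hij : i ≠ j) (hik : i ≠ k) (hjk : j ≠ k) (hi : a i ≠ 0) (hk : a k = 0)
    (hc : quadraticChar F (-(a j / a i)) = -1) (hej : e i * -(a j / a i) + e j = 0)
    (hek : quadraticChar F (e k) = -1) :
    ∃ i j k c u, IsLineComponent d e i j k c ∧ u ≠ 0 ∧
      ∑ m, C (a m) * X m = C u * (X i - C c * X j) := by
  refine ⟨i, j, k, -(a j / a i), a i, ⟨hij, hik, hjk, ?_, ?_, ?_⟩, hi, ?_⟩
  · exact FiniteField.pow_eq_neg_one_of_quadraticChar_eq_neg_one hq hc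
  · linear_combination hej
  · exact FiniteField.pow_eq_neg_one_of_quadraticChar_eq_neg_one hq hek
  · rw [Fin.sum_univ_three_of_ne hij hik hjk, hk, mul_sub, ← mul_assoc, ← map_mul, mul_neg,
      mul_div_cancel₀ _ hi, map_neg, map_zero]
    ring

theorem exists_isLineComponent_of_dvd (hq : Fintype.card F = 2 * d + 1) (hF : 5 ≤ ringChar F)
    (e : Fin 3 → F) {ℓ : MvPolynomial (Fin 3) F} (hℓ0 : ℓ ≠ 0) (hℓ : ℓ.IsHomogeneous 1)
    (hdvd : ℓ ∣ fermatSlice F d (e 0) (e 1) (e 2)) :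
    ∃ i j k c u, IsLineComponent d e i j k c ∧ u ≠ 0 ∧ ℓ = C u * (X i - C c * X j) := by
  set a : Fin 3 → F := fun m => coeff (Finsupp.single m 1) ℓ
  have hrep : ℓ = ∑ m, C (a m) * X m := eq_sum_C_mul_X_of_isHomogeneous_one hℓ
  obtain ⟨i, hi⟩ : ∃ i, a i ≠ 0 := by
    by_contra! h
    exact hℓ0 (by simp [hrep, h])
  obtain ⟨j, k, hij, hik, hjk⟩ : ∃ j k : Fin 3, i ≠ j ∧ i ≠ k ∧ j ≠ k := by
    fin_cases i <;> decide
  rw [hrep] at hdvd ⊢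
  rcases quadraticChar_binary_forms
      (quadraticChar_sum_eq_zero_of_linear_dvd hq hF hij hik hjk hi hdvd) with
    ⟨hβ, hγ, hα, hδ⟩ | ⟨hα, hδ, hβ, hγ⟩
  · refine exists_isLineComponent_of_coeff_eq_zero hq hij hik hjk hi ?_ hα hγ ?_
    · simpa [hi] using hβ
    · simpa [hβ] using hδ
  · refine exists_isLineComponent_of_coeff_eq_zero hq hik hij hjk.symm hi ?_ hβ hδ ?_
    · simpa [hi] using hα
    · simpa [hα] using hγ

end Classification

namespace IsLineComponent

variable {F : Type} [Field F] [Fintype F] {d : ℕ} {e : Fin 3 → F} {i j k : Fin 3} {c : F}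
  {v : Fin 3 → F} {Q : MvPolynomial (Fin 3) F}

theorem eval_ne_zero_of_mul_eq_neg (hq : Fintype.card F = 2 * d + 1) (hF : 5 ≤ ringChar F)
    (hL : IsLineComponent d e i j k c) (hei : e i ≠ 0) (hQ : Irreducible Q)
    (hQdeg : 2 ≤ Q.totalDegree) (hQdvd : Q ∣ fermatSlice F d (e 0) (e 1) (e 2)) (hv : v ≠ 0)
    (hvi : v i = c * v j) (hy : e i * v i = -(e k * v k)) : eval v Q ≠ 0 := by
  intro hQv
  obtain ⟨hd2, hd, hd1⟩ := FiniteField.two_le_and_natCast_ne_zero hq hF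
  have hsing := hL.pow_eq_of_eval_pderiv_eq_zero hd hvi
    (hL.eval_pderiv_eq_zero hQ hQdeg hQdvd hvi hQv i)
  have hc := hL.ne_zero (by omega)
  have hξ : e k * v k ≠ 0 := by
    intro h0
    rw [h0, neg_zero] at hy
    have hvi0 : v i = 0 := (mul_eq_zero.mp hy).resolve_left hei
    have hvj0 : v j = 0 := (mul_eq_zero.mp (hvi ▸ hvi0)).resolve_left hc
    have hvk0 : v k = 0 := (mul_eq_zero.mp h0).resolve_left (hL.coeff_ne_zero (by omega))
    refine hv (funext fun m => ?_)
    rcases Fin.eq_or_eq_or_eq_of_ne hL.ne_ij hL.ne_ik hL.ne_jk m with rfl | rfl | rfl <;>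
      assumption
  have hL₂ := hL.other_of_coeff_pow_eq hei (coeff_pow_eq_of_mul_eq_neg hd2 hξ hsing hy)
  have hv₂ : v i = -(e k / e i) * v k := by
    field_simp
    linear_combination hy
  have hL₂L : ¬ X i - C (-(e k / e i)) * X k ∣ (X i - C c * X j : MvPolynomial (Fin 3) F) := by
    intro h
    have := map_dvd (eval (Pi.single j 1)) h
    simp [hL.ne_ij.symm, hL.ne_jk] at this
    exact hc this
  have h0 := eval_pderiv_pderiv_eq_zero_of_dvd hL.dvd (prime_X_sub_C_mul_X hL₂.ne_ij _) hL₂.dvd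
    hL₂L hQ.prime hQdvd (not_dvd_X_sub_C_mul_X hQdeg hL.ne_ij c)
    (not_dvd_X_sub_C_mul_X hQdeg hL₂.ne_ij _) (by simp [hvi]) (by simp [hv₂]) hQv j i
  rw [eval_pderiv_pderiv_fermatSlice e v hL.ne_ij, hL.sum_coeff_mul_eq hvi, hL.coeff_eq] at h0
  simp [hd, hd1, hei, hc, hξ] at h0

theorem eval_ne_zero (hq : Fintype.card F = 2 * d + 1) (hF : 5 ≤ ringChar F)
    (hL : IsLineComponent d e i j k c) (hQ : Irreducible Q) (hQdeg : 2 ≤ Q.totalDegree)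
    (hQdvd : Q ∣ fermatSlice F d (e 0) (e 1) (e 2)) (hv : v ≠ 0) (hvi : v i = c * v j) :
    eval v Q ≠ 0 := by
  intro hQv
  obtain ⟨hd2, hd, -⟩ := FiniteField.two_le_and_natCast_ne_zero hq hF
  rcases eq_or_ne (e i) 0 with hei | hei
  · obtain ⟨s, hs⟩ := FiniteField.X_pow_add_X_pow_eq_prod hq i j
    rw [hL.fermatSlice_eq hei, hs] at hQdvd
    obtain ⟨x, -, hx⟩ := hQ.prime.exists_mem_multiset_map_dvd hQdvd
    exact not_dvd_X_sub_C_mul_X hQdeg hL.ne_ij x hx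
  have hsing := hL.pow_eq_of_eval_pderiv_eq_zero hd hvi
    (hL.eval_pderiv_eq_zero hQ hQdeg hQdvd hvi hQv i)
  have hsq : (e i * v i) ^ 2 = (e k * v k) ^ 2 := by
    refine FiniteField.sq_eq_sq_of_pow_pred_eq hq hd2 hei ?_
    rw [mul_pow, hsing, ← pow_sub_one_mul (by omega : d ≠ 0)]
    ring
  rcases sq_eq_sq_iff_eq_or_eq_neg.mp hsq with hy | hy
  -- Written as `X j = c⁻¹ X i`, the same line has `e j * v j = -(e k * v k)`.
  · have hc := hL.ne_zero (by omega)
    refine (hL.symm (by omega)).eval_ne_zero_of_mul_eq_neg hq hF ?_ hQ hQdeg hQdvd hv ?_ ?_ hQv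
    · rw [hL.coeff_eq]
      exact neg_ne_zero.mpr (mul_ne_zero hc hei)
    · rw [hvi, inv_mul_cancel_left₀ hc]
    · rw [hL.coeff_eq, ← hy, hvi]
      ring
  · exact hL.eval_ne_zero_of_mul_eq_neg hq hF hei hQ hQdeg hQdvd hv hvi hy hQv

end IsLineComponent

theorem statement8_general (p h : ℕ) (hp : Nat.Prime p) (hp3 : 3 < p)
    (F : Type) [Field F] [Fintype F] (hcard : Fintype.card F = p ^ h)
    (d : ℕ) (hd : p ^ h = 2 * d + 1) (e0 e1 e2 : F)
    (ℓ : MvPolynomial (Fin 3) F) (hl0 : ℓ ≠ 0) (hlin : ℓ.IsHomogeneous 1)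
    (hldvd : ℓ ∣ fermatSlice F d e0 e1 e2)
    (Q : MvPolynomial (Fin 3) F) (hQirr : Irreducible Q) (hQdeg : 2 ≤ Q.totalDegree)
    (hQdvd : Q ∣ fermatSlice F d e0 e1 e2) :
    ¬ ∃ v : Fin 3 → F, v ≠ 0 ∧ MvPolynomial.eval v ℓ = 0 ∧ MvPolynomial.eval v Q = 0 := by
  classical
  rintro ⟨v, hv, hℓv, hQv⟩
  have hq : Fintype.card F = 2 * d + 1 := hcard.trans hd
  have hF : 5 ≤ ringChar F := by
    have := Fact.mk hp
    have := charP_of_card_eq_prime_pow hcard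
    have : p ≠ 4 := by rintro rfl; norm_num at hp
    rw [ringChar.eq F p]
    omega
  obtain ⟨i, j, k, c, u, hL, hu, rfl⟩ :=
    exists_isLineComponent_of_dvd hq hF ![e0, e1, e2] hl0 hlin hldvd
  have hvi : v i = c * v j := by simpa [hu, sub_eq_zero] using hℓv
  exact hL.eval_ne_zero hq hF hQirr hQdeg hQdvd hv hvi hQv

/-- If `ℓ` is a nonzero linear form dividing `C` and `Q` is an irreducible
factor of `C` of degree at least `2`, then no point of `ℙ²(F_q)` (i.e. no nonzero triple
over `F_q`, up to scalars) lies on both `ℓ = 0` and `Q = 0`: the union of the linear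
components of the curve `C = 0` is `F_q`-disjoint from its remaining components. -/
theorem statement8 (p h : ℕ) (hp : Nat.Prime p) (hp3 : 3 < p) (hh : 0 < h)
    (F : Type) [Field F] [Fintype F] (hcard : Fintype.card F = p ^ h)
    (d : ℕ) (hd : p ^ h = 2 * d + 1) (e0 e1 e2 : F)
    (ℓ : MvPolynomial (Fin 3) F) (hl0 : ℓ ≠ 0) (hlin : ℓ.IsHomogeneous 1)
    (hldvd : ℓ ∣ fermatSlice F d e0 e1 e2)
    (Q : MvPolynomial (Fin 3) F) (hQirr : Irreducible Q) (hQdeg : 2 ≤ Q.totalDegree)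
    (hQdvd : Q ∣ fermatSlice F d e0 e1 e2) :
    ¬ ∃ v : Fin 3 → F, v ≠ 0 ∧ MvPolynomial.eval v ℓ = 0 ∧ MvPolynomial.eval v Q = 0 :=
  statement8_general p h hp hp3 F hcard d hd e0 e1 e2 ℓ hl0 hlin hldvd Q hQirr hQdeg hQdvd
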